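/- Assume in addition that the R-modules H^0(P, D) and H^1(P, D) have finite length. Then for every even integer n with n ≤ a − 2, the R-modules H^n(T, D) and H^{n+1}(T, D) have finite length, and length_R H^n(T, D) − length_R H^{n+1}(T, D) = length_R H^0(P, D) − length_R H^1(P, D). In particular the difference length_R H^n(T) − length_R H^{n+1}(T) is independent of the even integer n ≤ a − 2. (This is the algebraic content of the paper's proof that the degree of the difference of the stable Tors — the Kato–Saito localized intersection number — is computed by the Euler characteristic of the folded two-periodic complex, i.e. of the associated matrix factorization.) -/

import Mathlib

open DirectSum

set_option synthInstance.maxHeartbeats 1000000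
set_option maxHeartbeats 1000000

/-- Cast of a `ℤ`-indexed family of modules along an equality of indices. -/
def lcast (R : Type) [CommRing R] (C : ℤ → Type) [∀ j, AddCommGroup (C j)]
    [∀ j, Module R (C j)] {j j' : ℤ} (e : j = j') : C j →ₗ[R] C j' := by
  subst e; exact LinearMap.id

/-- The totalization `T^n = ⊕_{i ≥ 0} M^{n+2i}`. -/
abbrev Ttot (M : ℤ → Type) [∀ j, AddCommGroup (M j)] (n : ℤ) : Type :=
  ⨁ (i : ℕ), M (n + 2 * (i : ℤ))

/-- The folded object `P^n = ⊕_{i ∈ ℤ} M^{n+2i}`. -/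
abbrev Ptot (M : ℤ → Type) [∀ j, AddCommGroup (M j)] (n : ℤ) : Type :=
  ⨁ (i : ℤ), M (n + 2 * i)

/-- The degree-one map `D = d + h` on the totalization `T`:  out of the summand
`M^{n+2i}` it is the sum of `d` (landing in summand `i`) and `h` (landing in
summand `i - 1`; for `i = 0` there is no such summand and the `h`-component is zero). -/
noncomputable def DT (R : Type) [CommRing R] (M : ℤ → Type) [∀ j, AddCommGroup (M j)]
    [∀ j, Module R (M j)]
    (d : ∀ j, M j →ₗ[R] M (j + 1)) (h : ∀ j, M j →ₗ[R] M (j - 1)) (n : ℤ) :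
    Ttot M n →ₗ[R] Ttot M (n + 1) :=
  DirectSum.toModule R ℕ (Ttot M (n + 1)) (fun i =>
    ((DirectSum.lof R ℕ (fun i : ℕ => M (n + 1 + 2 * (i : ℤ))) i).comp
      ((lcast R M (show n + 2 * (i : ℤ) + 1 = n + 1 + 2 * (i : ℤ) by ring)).comp
        (d (n + 2 * (i : ℤ)))))
    +
    (match i with
     | 0 => 0
     | (k + 1) =>
        (DirectSum.lof R ℕ (fun i : ℕ => M (n + 1 + 2 * (i : ℤ))) k).comp
          ((lcast R M (show n + 2 * ((k + 1 : ℕ) : ℤ) - 1 = n + 1 + 2 * (k : ℤ) by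
              push_cast; ring)).comp
            (h (n + 2 * ((k + 1 : ℕ) : ℤ))))))

/-- The degree-one map `D = d + h` on the folded object `P`: out of the summand
`M^{n+2i}` it is the sum of `d` (landing in summand `i`) and `h` (landing in
summand `i - 1`). -/
noncomputable def DP (R : Type) [CommRing R] (M : ℤ → Type) [∀ j, AddCommGroup (M j)]
    [∀ j, Module R (M j)]
    (d : ∀ j, M j →ₗ[R] M (j + 1)) (h : ∀ j, M j →ₗ[R] M (j - 1)) (n : ℤ) :
    Ptot M n →ₗ[R] Ptot M (n + 1) :=
  DirectSum.toModule R ℤ (Ptot M (n + 1)) (fun i =>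
    ((DirectSum.lof R ℤ (fun i : ℤ => M (n + 1 + 2 * i)) i).comp
      ((lcast R M (show n + 2 * i + 1 = n + 1 + 2 * i by ring)).comp (d (n + 2 * i))))
    +
    ((DirectSum.lof R ℤ (fun i : ℤ => M (n + 1 + 2 * i)) (i - 1)).comp
      ((lcast R M (show n + 2 * i - 1 = n + 1 + 2 * (i - 1) by ring)).comp (h (n + 2 * i)))))

/-- The `n`-th cohomology of a `ℤ`-graded object equipped with degree-one maps
`D n : C^n → C^{n+1}`: the kernel of `D n` modulo the image of `D (n-1)`. -/
abbrev coh (R : Type) [CommRing R] {C : ℤ → Type} [∀ j, AddCommGroup (C j)]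
    [∀ j, Module R (C j)] (D : ∀ n, C n →ₗ[R] C (n + 1)) (n : ℤ) : Type :=
  ↥(LinearMap.ker (D n)) ⧸
    (Submodule.comap (LinearMap.ker (D n)).subtype
      (LinearMap.range ((lcast R C (show n - 1 + 1 = n by ring)).comp (D (n - 1)))))

/-!
Since `M` vanishes below degree `a`, for `m ≤ a` the summands `M^{m+2i}`, `i < 0`, of `P^m`
that `T^m` omits are zero, and so is the target `M^{m-1}` of the one component
`h : M^m → M^{m-1}` of `D` that `T^m` drops. Hence `T` and `P` agree in degrees
`n - 1, n, n + 1` once `n ≤ a - 2`, and since `P^{m+2}` is `P^m` reindexed by `i ↦ i + 1`,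
this identifies `H^n(T)` with `H^0(P)` and `H^{n+1}(T)` with `H^1(P)` for even `n`.
Lengths of composition series are then compared by Jordan–Hölder.
-/

section KerQuotRange

variable {R : Type} [CommRing R] {A B C A' B' C' : Type}
  [AddCommGroup A] [Module R A] [AddCommGroup B] [Module R B]
  [AddCommGroup C] [Module R C] [AddCommGroup A'] [Module R A']
  [AddCommGroup B'] [Module R B'] [AddCommGroup C'] [Module R C']

noncomputable def kerQuotRangeCongr {f : A →ₗ[R] B} {g : B →ₗ[R] C}
    {f' : A' →ₗ[R] B'} {g' : B' →ₗ[R] C'}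
    (eA : A ≃ₗ[R] A') (eB : B ≃ₗ[R] B') (eC : C ≃ₗ[R] C')
    (hf : eB.toLinearMap ∘ₗ f = f' ∘ₗ eA.toLinearMap)
    (hg : eC.toLinearMap ∘ₗ g = g' ∘ₗ eB.toLinearMap) :
    (LinearMap.ker g ⧸ (LinearMap.range f).comap (LinearMap.ker g).subtype) ≃ₗ[R]
      (LinearMap.ker g' ⧸ (LinearMap.range f').comap (LinearMap.ker g').subtype) := by
  have hker : (LinearMap.ker g).map eB.toLinearMap = LinearMap.ker g' := by
    rw [Submodule.map_equiv_eq_comap_symm, ← LinearMap.ker_comp, ← LinearEquiv.ker_comp eC,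
      ← LinearMap.comp_assoc, hg, LinearMap.comp_assoc, LinearEquiv.comp_coe,
      LinearEquiv.symm_trans_self, LinearEquiv.refl_toLinearMap, LinearMap.comp_id]
  have hrange : (LinearMap.range f).map eB.toLinearMap = LinearMap.range f' := by
    rw [← LinearMap.range_comp, hf, LinearMap.range_comp_of_range_eq_top _ eA.range]
  refine Submodule.Quotient.equiv _ _ (eB.ofSubmodules _ _ hker) ?_
  ext y
  simp only [Submodule.mem_map_equiv, Submodule.mem_comap, Submodule.coe_subtype, ← hrange]
  rfl

end KerQuotRange

section Cast

variable {R : Type} [CommRing R] {C : ℤ → Type} [∀ j, AddCommGroup (C j)]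
  [∀ j, Module R (C j)]

lemma lcast_lcast {j j' j'' : ℤ} (e : j = j') (e' : j' = j'') (x : C j) :
    lcast R C e' (lcast R C e x) = lcast R C (e.trans e') x := by
  subst e e'; rfl

lemma map_lcast (φ : ℤ → ℤ) (F : ∀ j, C j →ₗ[R] C (φ j)) {j j' : ℤ} (e : j = j') (x : C j) :
    F j' (lcast R C e x) = lcast R C (congrArg φ e) (F j x) := by
  subst e; rfl

lemma lof_lcast_congr {ι : Type} [DecidableEq ι] (f : ι → ℤ) {p q : ι} (hpq : p = q)
    {j : ℤ} (e : j = f p) (e' : j = f q) (x : C j) :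
    DirectSum.lof R ι (fun i => C (f i)) p (lcast R C e x)
      = DirectSum.lof R ι (fun i => C (f i)) q (lcast R C e' x) := by
  subst hpq e; rfl

lemma lof_of_subsingleton {ι : Type} [DecidableEq ι] (f : ι → ℤ) (p : ι)
    [Subsingleton (C (f p))] (x : C (f p)) :
    DirectSum.lof R ι (fun i => C (f i)) p x = 0 := by
  rw [Subsingleton.elim x 0, map_zero]

end Cast

section Fold

variable (R : Type) [CommRing R] (M : ℤ → Type) [∀ j, AddCommGroup (M j)]
  [∀ j, Module R (M j)]

/-- For `m = m' + 2c`, the summand `M^{m+2i}` of `T^m` is the summand `i + c` of `P^{m'}`. -/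
noncomputable def toFold (m m' c : ℤ) (hm : m = m' + 2 * c) : Ttot M m →ₗ[R] Ptot M m' :=
  DirectSum.toModule R ℕ (Ptot M m') fun i =>
    (DirectSum.lof R ℤ (fun j : ℤ => M (m' + 2 * j)) ((i : ℤ) + c)).comp
      (lcast R M (show m + 2 * (i : ℤ) = m' + 2 * ((i : ℤ) + c) by omega))

noncomputable def ofFold (m m' c : ℤ) (hm : m = m' + 2 * c) : Ptot M m' →ₗ[R] Ttot M m :=
  DirectSum.toModule R ℤ (Ttot M m) fun i =>
    if hi : 0 ≤ i - c then
      (DirectSum.lof R ℕ (fun k : ℕ => M (m + 2 * (k : ℤ))) (i - c).toNat).comp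
        (lcast R M (show m' + 2 * i = m + 2 * ((i - c).toNat : ℤ) by omega))
    else 0

lemma ofFold_comp_toFold (m m' c : ℤ) (hm : m = m' + 2 * c) :
    ofFold R M m m' c hm ∘ₗ toFold R M m m' c hm = LinearMap.id := by
  refine DirectSum.linearMap_ext _ fun i => LinearMap.ext fun x => ?_
  simp only [LinearMap.comp_apply, toFold, ofFold, DirectSum.toModule_lof, LinearMap.id_apply,
    dif_pos (show (0 : ℤ) ≤ i + c - c by omega), lcast_lcast]
  exact lof_lcast_congr (fun k : ℕ => m + 2 * (k : ℤ)) (by omega) _ rfl x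

lemma toFold_comp_ofFold (m m' c : ℤ) (hm : m = m' + 2 * c)
    (hM : ∀ i < 0, Subsingleton (M (m + 2 * i))) :
    toFold R M m m' c hm ∘ₗ ofFold R M m m' c hm = LinearMap.id := by
  refine DirectSum.linearMap_ext _ fun i => LinearMap.ext fun x => ?_
  simp only [LinearMap.comp_apply, ofFold, DirectSum.toModule_lof, LinearMap.id_apply]
  by_cases hi : 0 ≤ i - c
  · simp only [dif_pos hi, LinearMap.comp_apply, toFold, DirectSum.toModule_lof, lcast_lcast]
    exact lof_lcast_congr (fun j : ℤ => m' + 2 * j) (by omega) _ rfl x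
  · have : Subsingleton (M (m' + 2 * i)) := by
      rw [show m' + 2 * i = m + 2 * (i - c) by omega]; exact hM _ (by omega)
    rw [dif_neg hi, LinearMap.zero_apply, map_zero, lof_of_subsingleton]

noncomputable def foldEquiv (m m' c : ℤ) (hm : m = m' + 2 * c)
    (hM : ∀ i < 0, Subsingleton (M (m + 2 * i))) : Ttot M m ≃ₗ[R] Ptot M m' :=
  LinearEquiv.ofLinearMap (f := toFold R M m m' c hm) (g := ofFold R M m m' c hm)
    (toFold_comp_ofFold R M m m' c hm hM) (ofFold_comp_toFold R M m m' c hm)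

variable (d : ∀ j, M j →ₗ[R] M (j + 1)) (h : ∀ j, M j →ₗ[R] M (j - 1))

lemma toFold_comp_DT (m m' c : ℤ) (hm : m = m' + 2 * c) [Subsingleton (M (m - 1))] :
    toFold R M (m + 1) (m' + 1) c (by omega) ∘ₗ DT R M d h m
      = DP R M d h m' ∘ₗ toFold R M m m' c hm := by
  refine DirectSum.linearMap_ext _ fun i => LinearMap.ext fun x => ?_
  simp only [LinearMap.comp_apply, DT, toFold, DP, DirectSum.toModule_lof,
    LinearMap.add_apply, map_add]
  cases i with
  | zero =>
    have : Subsingleton (M (m' + 1 + 2 * (((0 : ℕ) : ℤ) + c - 1))) := by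
      rw [show m' + 1 + 2 * (((0 : ℕ) : ℤ) + c - 1) = m - 1 by omega]; infer_instance
    simp only [LinearMap.zero_apply, map_zero, add_zero, lof_of_subsingleton]
    rw [map_lcast (· + 1) d, lcast_lcast, lcast_lcast]
  | succ k =>
    simp only [LinearMap.comp_apply, DirectSum.toModule_lof]
    rw [map_lcast (· + 1) d, map_lcast (· - 1) h]
    simp only [lcast_lcast]
    congr 1
    exact lof_lcast_congr (fun j : ℤ => m' + 1 + 2 * j) (by omega) _ _ _

lemma toFold_comp_lcast {m₁ m₂ m₁' m₂' c : ℤ} (e : m₁ = m₂) (e' : m₁' = m₂')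
    (h₁ : m₁ = m₁' + 2 * c) (h₂ : m₂ = m₂' + 2 * c) :
    toFold R M m₂ m₂' c h₂ ∘ₗ lcast R (Ttot M) e
      = lcast R (Ptot M) e' ∘ₗ toFold R M m₁ m₁' c h₁ := by
  subst e e'; rfl

noncomputable def cohFoldEquiv (m m' c : ℤ) (hm : m = m' + 2 * c)
    (hM : ∀ j < m, Subsingleton (M j)) :
    coh R (DT R M d h) m ≃ₗ[R] coh R (DP R M d h) m' := by
  have : Subsingleton (M (m - 1)) := hM _ (by omega)
  have : Subsingleton (M (m - 1 - 1)) := hM _ (by omega)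
  refine kerQuotRangeCongr
    (foldEquiv R M (m - 1) (m' - 1) c (by omega) fun i hi => hM _ (by omega))
    (foldEquiv R M m m' c hm fun i hi => hM _ (by omega))
    (foldEquiv R M (m + 1) (m' + 1) c (by omega) fun i hi => hM _ (by omega))
    ?_ (toFold_comp_DT R M d h m m' c hm)
  change toFold R M m m' c hm ∘ₗ lcast R (Ttot M) (by ring) ∘ₗ DT R M d h (m - 1)
    = (lcast R (Ptot M) (by ring) ∘ₗ DP R M d h (m' - 1)) ∘ₗ
      toFold R M (m - 1) (m' - 1) c (by omega)
  rw [← LinearMap.comp_assoc,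
    toFold_comp_lcast R M (m₁' := m' - 1 + 1) (by ring) (by ring) (by omega) hm,
    LinearMap.comp_assoc, toFold_comp_DT R M d h (m - 1) (m' - 1) c (by omega),
    LinearMap.comp_assoc]

end Fold

lemma CompositionSeries.length_eq_of_linearEquiv {R : Type} [CommRing R] {N N' : Type}
    [AddCommGroup N] [Module R N] [AddCommGroup N'] [Module R N'] (e : N ≃ₗ[R] N')
    {s : CompositionSeries (Submodule R N)} {s' : CompositionSeries (Submodule R N')}
    (hs₀ : s.head = ⊥) (hs₁ : s.last = ⊤) (hs'₀ : s'.head = ⊥) (hs'₁ : s'.last = ⊤) :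
    s.length = s'.length := by
  have h := Module.length_compositionSeries s hs₀ hs₁
  rw [e.length_eq, ← Module.length_compositionSeries s' hs'₀ hs'₁] at h
  exact_mod_cast h

/-- Assume that the `R`-modules `H^0(P, D)` and `H^1(P, D)` have finite
length.  Then for every even integer `n ≤ a - 2` the `R`-modules `H^n(T, D)` and
`H^{n+1}(T, D)` have finite length, and
`length H^n(T) - length H^{n+1}(T) = length H^0(P) - length H^1(P)`;
lengths are expressed via (arbitrary) composition series of the corresponding modules,
so in particular the difference is independent of the even integer `n ≤ a - 2`. -/
theorem euler_characteristic_of_stable_cohomology_eq_euler_characteristic_of_folded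
    (R : Type) [CommRing R] (a : ℤ)
    (M : ℤ → Type) [∀ j, AddCommGroup (M j)] [∀ j, Module R (M j)]
    (d : ∀ j, M j →ₗ[R] M (j + 1)) (h : ∀ j, M j →ₗ[R] M (j - 1))
    (hMa : ∀ j, j < a → Subsingleton (M j))
    (hfin0 : IsFiniteLength R (coh R (DP R M d h) 0))
    (hfin1 : IsFiniteLength R (coh R (DP R M d h) 1)) :
    ∀ n : ℤ, Even n → n ≤ a - 2 →
      IsFiniteLength R (coh R (DT R M d h) n) ∧
      IsFiniteLength R (coh R (DT R M d h) (n + 1)) ∧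
      (∀ (sT : CompositionSeries (Submodule R (coh R (DT R M d h) n)))
         (sT' : CompositionSeries (Submodule R (coh R (DT R M d h) (n + 1))))
         (sP0 : CompositionSeries (Submodule R (coh R (DP R M d h) 0)))
         (sP1 : CompositionSeries (Submodule R (coh R (DP R M d h) 1))),
        sT.head = ⊥ → sT.last = ⊤ →
        sT'.head = ⊥ → sT'.last = ⊤ →
        sP0.head = ⊥ → sP0.last = ⊤ →
        sP1.head = ⊥ → sP1.last = ⊤ →
        (sT.length : ℤ) - (sT'.length : ℤ) = (sP0.length : ℤ) - (sP1.length : ℤ)) := by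
  rintro n ⟨c, rfl⟩ hna
  have e₀ := cohFoldEquiv R M d h (c + c) 0 c (by ring) fun j hj => hMa j (by omega)
  have e₁ := cohFoldEquiv R M d h (c + c + 1) 1 c (by ring) fun j hj => hMa j (by omega)
  refine ⟨e₀.symm.isFiniteLength hfin0, e₁.symm.isFiniteLength hfin1, ?_⟩
  intro sT sT' sP0 sP1 hT₀ hT₁ hT'₀ hT'₁ hP0₀ hP0₁ hP1₀ hP1₁
  rw [CompositionSeries.length_eq_of_linearEquiv e₀ hT₀ hT₁ hP0₀ hP0₁,
    CompositionSeries.length_eq_of_linearEquiv e₁ hT'₀ hT'₁ hP1₀ hP1₁]
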